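/- (Main Theorem) The assignment sending a commutative †-Frobenius monoid (m, u) on H to its set of copyable elements is a bijection between the set of commutative †-Frobenius monoid structures on H and the set of orthogonal bases of H (i.e., sets B ⊆ H of pairwise-orthogonal nonzero vectors that span H). -/

import Mathlib

noncomputable section

open scoped TensorProduct ComplexConjugate InnerProductSpace

open scoped TensorProduct ComplexConjugate InnerProductSpace

variable {H : Type*} [NormedAddCommGroup H] [InnerProductSpace ℂ H] [FiniteDimensional ℂ H]

namespace TensorIP

variable (H) in
/-- A basis of `H ⊗ H` built from an orthonormal basis of `H`. -/
def tb : Module.Basis (Fin (Module.finrank ℂ H) × Fin (Module.finrank ℂ H)) ℂ (H ⊗[ℂ] H) :=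
  Module.Basis.tensorProduct (stdOrthonormalBasis ℂ H).toBasis (stdOrthonormalBasis ℂ H).toBasis

variable (H) in
/-- The canonical inner product space structure on `H ⊗ H`, which is determined by
`⟪a ⊗ b, c ⊗ d⟫ = ⟪a,c⟫ * ⟪b,d⟫` (see `TensorIP.inner_tmul` below). -/
def core : InnerProductSpace.Core ℂ (H ⊗[ℂ] H) where
  inner x y := ∑ p, conj ((tb H).repr x p) * ((tb H).repr y p)
  conj_inner_symm x y := by
    simp only [map_sum, map_mul, starRingEnd_self_apply]
    exact Finset.sum_congr rfl fun p _ => by ring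
  re_inner_nonneg x := by
    show 0 ≤ RCLike.re (∑ p, conj ((tb H).repr x p) * ((tb H).repr x p))
    have h : ∀ p : Fin (Module.finrank ℂ H) × Fin (Module.finrank ℂ H),
        conj ((tb H).repr x p) * ((tb H).repr x p)
          = ((Complex.normSq ((tb H).repr x p) : ℝ) : ℂ) := fun p => by
      rw [mul_comm, Complex.mul_conj]
    simp only [h]
    rw [map_sum]
    refine Finset.sum_nonneg fun p _ => ?_
    simp [Complex.normSq_nonneg]
  add_left x y z := by
    simp only [map_add, Finsupp.add_apply]
    rw [← Finset.sum_add_distrib]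
    exact Finset.sum_congr rfl fun p _ => by ring
  smul_left x y r := by
    simp only [map_smul, Finsupp.smul_apply, smul_eq_mul, map_mul, Finset.mul_sum]
    exact Finset.sum_congr rfl fun p _ => by ring
  definite x hx := by
    have hx' : ∑ p, conj ((tb H).repr x p) * ((tb H).repr x p) = 0 := hx
    have h2 : ∑ p, ((Complex.normSq ((tb H).repr x p) : ℝ) : ℂ) = 0 := by
      rw [← hx']
      exact Finset.sum_congr rfl fun p _ => by rw [mul_comm, Complex.mul_conj]
    have h3 : ∑ p, Complex.normSq ((tb H).repr x p) = 0 := by exact_mod_cast h2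
    have h4 : ∀ p ∈ Finset.univ, Complex.normSq ((tb H).repr x p) = 0 :=
      (Finset.sum_eq_zero_iff_of_nonneg fun p _ => Complex.normSq_nonneg _).mp h3
    have h5 : (tb H).repr x = 0 := by
      ext p
      exact Complex.normSq_eq_zero.mp (h4 p (Finset.mem_univ p))
    simpa using (tb H).repr.map_eq_zero_iff.mp h5

instance : NormedAddCommGroup (H ⊗[ℂ] H) :=
  @InnerProductSpace.Core.toNormedAddCommGroup ℂ (H ⊗[ℂ] H) _ _ _ (core H)

instance : InnerProductSpace ℂ (H ⊗[ℂ] H) := InnerProductSpace.ofCore (core H).toCore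

attribute [-instance] TensorProduct.instInner

theorem inner_tmul (a b c d : H) :
    ⟪a ⊗ₜ[ℂ] b, c ⊗ₜ[ℂ] d⟫_ℂ = ⟪a, c⟫_ℂ * ⟪b, d⟫_ℂ := by
  have key : ∀ (x y : H) (p : Fin (Module.finrank ℂ H) × Fin (Module.finrank ℂ H)),
      (tb H).repr (x ⊗ₜ[ℂ] y) p
        = ⟪(stdOrthonormalBasis ℂ H) p.1, x⟫_ℂ * ⟪(stdOrthonormalBasis ℂ H) p.2, y⟫_ℂ := by
    rintro x y ⟨i, j⟩
    rw [tb, Module.Basis.tensorProduct_repr_tmul_apply, smul_eq_mul,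
      OrthonormalBasis.coe_toBasis_repr_apply, OrthonormalBasis.coe_toBasis_repr_apply,
      OrthonormalBasis.repr_apply_apply, OrthonormalBasis.repr_apply_apply, mul_comm]
  show (∑ p, conj ((tb H).repr (a ⊗ₜ[ℂ] b) p) * ((tb H).repr (c ⊗ₜ[ℂ] d) p)) = _
  simp only [key, map_mul]
  rw [← Finset.univ_product_univ, Finset.sum_product]
  have h : ∀ i j : Fin (Module.finrank ℂ H),
      (conj ⟪(stdOrthonormalBasis ℂ H) i, a⟫_ℂ * conj ⟪(stdOrthonormalBasis ℂ H) j, b⟫_ℂ) *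
        (⟪(stdOrthonormalBasis ℂ H) i, c⟫_ℂ * ⟪(stdOrthonormalBasis ℂ H) j, d⟫_ℂ)
      = (⟪a, (stdOrthonormalBasis ℂ H) i⟫_ℂ * ⟪(stdOrthonormalBasis ℂ H) i, c⟫_ℂ) *
        (⟪b, (stdOrthonormalBasis ℂ H) j⟫_ℂ * ⟪(stdOrthonormalBasis ℂ H) j, d⟫_ℂ) := by
    intro i j
    rw [inner_conj_symm, inner_conj_symm]; ring
  simp only [h]
  rw [← Finset.sum_mul_sum]
  rw [OrthonormalBasis.sum_inner_mul_inner, OrthonormalBasis.sum_inner_mul_inner]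

end TensorIP

/-- `(H, m, u)` is a commutative †-Frobenius monoid: `m` is associative and commutative,
`u 1` is a two-sided unit for `m`, and the Frobenius law
`(m ⊗ id) ∘ (id ⊗ δ) = δ ∘ m` holds, where `δ := m†`. -/
def IsFrobenius (m : H ⊗[ℂ] H →ₗ[ℂ] H) (u : ℂ →ₗ[ℂ] H) : Prop :=
  (m ∘ₗ TensorProduct.map m LinearMap.id
      = m ∘ₗ TensorProduct.map LinearMap.id m ∘ₗ (TensorProduct.assoc ℂ H H H).toLinearMap)
    ∧ (m ∘ₗ (TensorProduct.comm ℂ H H).toLinearMap = m)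
    ∧ (∀ x : H, m (u 1 ⊗ₜ[ℂ] x) = x)
    ∧ (∀ x : H, m (x ⊗ₜ[ℂ] u 1) = x)
    ∧ (TensorProduct.map m LinearMap.id ∘ₗ (TensorProduct.assoc ℂ H H H).symm.toLinearMap
        ∘ₗ TensorProduct.map LinearMap.id (LinearMap.adjoint m)
      = LinearMap.adjoint m ∘ₗ m)

/-- `ψ` is a copyable element: `δ ψ = ψ ⊗ ψ` and `ε ψ = 1`, where `δ := m†`, `ε := u†`. -/
def Copyable (m : H ⊗[ℂ] H →ₗ[ℂ] H) (u : ℂ →ₗ[ℂ] H) (ψ : H) : Prop :=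
  LinearMap.adjoint m ψ = ψ ⊗ₜ[ℂ] ψ ∧ LinearMap.adjoint u ψ = 1

variable (H) in
/-- `B` is an orthogonal basis of `H`: a set of pairwise-orthogonal nonzero vectors
spanning `H`. -/
def IsOrthogonalBasis (B : Set H) : Prop :=
  (∀ ψ ∈ B, ∀ χ ∈ B, ψ ≠ χ → ⟪ψ, χ⟫_ℂ = 0) ∧ (0 : H) ∉ B ∧ Submodule.span ℂ B = ⊤

/-! A vector `ψ` is copyable exactly when `x ↦ ⟪ψ, x⟫` is a unital multiplicative functional.
The Frobenius law makes the adjoint of left multiplication by `a` again a left multiplication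
(by `(⟪a, ·⟫ ⊗ id) (δ (u 1))`), so copyable elements are common eigenvectors of the commuting
family of left multiplications, with eigenvalue `⟪ψ, a⟫`; this forces distinct ones to be
orthogonal. The orthogonal complement of their span is invariant under all left multiplications,
so if it were nonzero it would contain a common eigenvector, and a multiple of that is copyable.
As the copyable elements span `H`, they determine `δ` and `ε`, hence `m` and `u`.
Conversely an orthogonal basis `(b i)` gives `δ (b i) = b i ⊗ b i`, `ε (b i) = 1`; the axioms for
`m := δ†`, `u := ε†` are checked against the functionals `⟪b i, ·⟫`, and the solutions of
`δ ψ = ψ ⊗ ψ`, `ε ψ = 1` are exactly the `b i`. -/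

-- Otherwise `⟪·, ·⟫` on `H ⊗ H` would elaborate to Mathlib's instance rather than to the one
-- underlying `LinearMap.adjoint` in `Copyable` and `IsFrobenius`.
attribute [-instance] TensorProduct.instInner

open LinearMap (adjoint adjoint_inner_left)
open InnerProductSpace (ext_inner_left_basis ext_inner_right_basis)

namespace TensorIP

theorem ext_inner_tmul {z w : H ⊗[ℂ] H}
    (h : ∀ x y : H, ⟪z, x ⊗ₜ[ℂ] y⟫_ℂ = ⟪w, x ⊗ₜ[ℂ] y⟫_ℂ) : z = w :=
  ext_inner_right_basis (tb H) fun i => by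
    simpa [tb, Module.Basis.tensorProduct_apply'] using h _ _

theorem adjoint_comm :
    adjoint (TensorProduct.comm ℂ H H).toLinearMap = (TensorProduct.comm ℂ H H).toLinearMap := by
  refine ((LinearMap.eq_adjoint_iff_basis (tb H) (tb H) _ _).2 fun i j => ?_).symm
  simp [tb, Module.Basis.tensorProduct_apply', inner_tmul, mul_comm]

theorem adjoint_mk_tmul (a p q : H) :
    adjoint (TensorProduct.mk ℂ H H a) (p ⊗ₜ[ℂ] q) = ⟪a, p⟫_ℂ • q :=
  ext_inner_right ℂ fun y => by
    rw [adjoint_inner_left, TensorProduct.mk_apply, inner_tmul, inner_smul_left, inner_conj_symm]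

theorem adjoint_mk_map_id (a : H) (f : H →ₗ[ℂ] H) (w : H ⊗[ℂ] H) :
    adjoint (TensorProduct.mk ℂ H H a) (TensorProduct.map LinearMap.id f w) =
      f (adjoint (TensorProduct.mk ℂ H H a) w) := by
  have : adjoint (TensorProduct.mk ℂ H H a) ∘ₗ TensorProduct.map LinearMap.id f =
      f ∘ₗ adjoint (TensorProduct.mk ℂ H H a) :=
    TensorProduct.ext' fun p q => by simp [adjoint_mk_tmul]
  exact LinearMap.congr_fun this w

end TensorIP

section InnerProductSpace

variable {𝕜 E : Type*} [RCLike 𝕜] [NormedAddCommGroup E] [InnerProductSpace 𝕜 E]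
  [FiniteDimensional 𝕜 E]

theorem LinearMap.adjoint_apply_eq_inner_apply_one (f : 𝕜 →ₗ[𝕜] E) (x : E) :
    adjoint f x = ⟪f 1, x⟫_𝕜 := by
  rw [show f = LinearMap.toSpanSingleton 𝕜 E (f 1) from LinearMap.ext_ring (by simp),
    LinearMap.adjoint_toSpanSingleton]
  simp

theorem LinearMap.orthogonal_mem_invtSubmodule {T : E →ₗ[𝕜] E} {U : Submodule 𝕜 E}
    (h : U ∈ Module.End.invtSubmodule (adjoint T)) : Uᗮ ∈ Module.End.invtSubmodule T := by
  rw [Module.End.mem_invtSubmodule_iff_forall_mem_of_mem] at h ⊢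
  refine fun x hx => (Submodule.mem_orthogonal _ _).2 fun s hs => ?_
  rw [← adjoint_inner_left]
  exact Submodule.inner_right_of_mem_orthogonal (h s hs) hx

end InnerProductSpace

theorem Module.End.exists_ne_zero_forall_apply_eq_smul_of_commute {K V ι : Type*} [Field K]
    [IsAlgClosed K] [AddCommGroup V] [Module K V] [FiniteDimensional K V]
    (f : ι → Module.End K V) (hf : ∀ i j, Commute (f i) (f j)) {W : Submodule K V}
    (hW : W ≠ ⊥) (hWf : ∀ i, W ∈ (f i).invtSubmodule) :
    ∃ v ∈ W, v ≠ 0 ∧ ∀ i, ∃ c : K, f i v = c • v := by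
  obtain ⟨W₀, ⟨hW₀W, hW₀, hW₀f⟩, hmin⟩ := IsArtinian.set_has_minimal
    {U : Submodule K V | U ≤ W ∧ U ≠ ⊥ ∧ ∀ i, U ∈ (f i).invtSubmodule} ⟨W, le_rfl, hW, hWf⟩
  -- by minimality, the eigenspace of `f i` in `W₀`, being invariant under the family, is `W₀`
  have hscalar : ∀ i, ∃ c : K, ∀ x ∈ W₀, f i x = c • x := by
    intro i
    have : Nontrivial W₀ := Submodule.nontrivial_iff_ne_bot.mpr hW₀
    obtain ⟨c, hc⟩ := Module.End.exists_eigenvalue ((f i).restrict (hW₀f i))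
    obtain ⟨w, hw⟩ := hc.exists_hasEigenvector
    have hwE : (w : V) ∈ W₀ ⊓ (f i).eigenspace c :=
      ⟨w.2, Module.End.mem_eigenspace_iff.mpr (congrArg Subtype.val hw.apply_eq_smul)⟩
    have hE : W₀ ⊓ (f i).eigenspace c = W₀ := by
      refine inf_le_left.lt_or_eq.resolve_left fun hlt => hmin _ ⟨?_, ?_, fun j => ?_⟩ hlt
      · exact inf_le_left.trans hW₀W
      · exact fun h => hw.2 (Subtype.ext (by simpa [h] using hwE))
      · exact Module.End.invtSubmodule.inf_mem (hW₀f j)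
          (Module.End.mapsTo_genEigenspace_of_comm (hf i j) c 1)
    exact ⟨c, fun x hx => Module.End.mem_eigenspace_iff.mp (hE.ge hx).2⟩
  choose c hc using hscalar
  obtain ⟨v, hv, hv0⟩ := Submodule.exists_mem_ne_zero_of_ne_bot hW₀
  exact ⟨v, hW₀W hv, hv0, fun i => ⟨c i, hc i v hv⟩⟩

namespace Module.Basis

variable {R M ι : Type*} [CommSemiring R] [AddCommMonoid M] [Module R M] (v : Basis ι R M)

def copy : M →ₗ[R] M ⊗[R] M := v.constr R fun i => v i ⊗ₜ v i

@[simp] theorem copy_apply_self (i : ι) : v.copy (v i) = v i ⊗ₜ v i := v.constr_basis R _ i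

theorem tensorProduct_repr_copy (x : M) :
    (v.tensorProduct v).repr (v.copy x) = (v.repr x).mapDomain fun i => (i, i) := by
  have : (v.tensorProduct v).repr.toLinearMap ∘ₗ v.copy =
      Finsupp.lmapDomain R R (fun i => (i, i)) ∘ₗ v.repr.toLinearMap :=
    v.ext fun k => by simp [← Module.Basis.tensorProduct_apply]
  exact LinearMap.congr_fun this x

theorem exists_eq_of_copy_apply_eq_tmul_self [IsDomain R] {ψ : M} (hψ : v.copy ψ = ψ ⊗ₜ ψ)
    (h0 : ψ ≠ 0) : ∃ i, v i = ψ := by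
  set c := v.repr ψ
  have hcoeff : ∀ i j, c j * c i = (c.mapDomain fun i => (i, i)) (i, j) := fun i j => by
    rw [← tensorProduct_repr_copy, hψ, Module.Basis.tensorProduct_repr_tmul_apply, smul_eq_mul]
  obtain ⟨i, hi⟩ : ∃ i, c i ≠ 0 := by
    by_contra! h
    exact h0 (v.repr.map_eq_zero_iff.mp (Finsupp.ext h))
  have hci : c i = 1 := by
    have := hcoeff i i
    rw [Finsupp.mapDomain_apply (fun a b h => congrArg Prod.fst h)] at this
    exact (mul_eq_right₀ hi).mp this
  refine ⟨i, v.repr.injective (Finsupp.ext fun j => ?_)⟩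
  rw [v.repr_self]
  rcases eq_or_ne i j with rfl | hij
  · rw [Finsupp.single_eq_same, hci]
  · have := hcoeff i j
    rw [Finsupp.mapDomain_of_notMem_range _ _ (by simpa using hij), hci, mul_one] at this
    rw [Finsupp.single_eq_of_ne hij.symm, ← this]

end Module.Basis

def mulLeft {R M : Type*} [CommSemiring R] [AddCommMonoid M] [Module R M]
    (m : M ⊗[R] M →ₗ[R] M) (a : M) : M →ₗ[R] M :=
  m ∘ₗ TensorProduct.mk R M M a

@[simp] theorem mulLeft_apply {R M : Type*} [CommSemiring R] [AddCommMonoid M] [Module R M]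
    (m : M ⊗[R] M →ₗ[R] M) (a x : M) : mulLeft m a x = m (a ⊗ₜ x) := rfl

variable {m m' : H ⊗[ℂ] H →ₗ[ℂ] H} {u u' : ℂ →ₗ[ℂ] H} {ψ χ : H}

theorem copyable_iff : Copyable m u ψ ↔
    (∀ x y : H, ⟪ψ, m (x ⊗ₜ[ℂ] y)⟫_ℂ = ⟪ψ, x⟫_ℂ * ⟪ψ, y⟫_ℂ) ∧ ⟪ψ, u 1⟫_ℂ = 1 := by
  refine and_congr ⟨fun h x y => ?_, fun h => TensorIP.ext_inner_tmul fun x y => ?_⟩ ?_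
  · rw [← adjoint_inner_left, h, TensorIP.inner_tmul]
  · rw [adjoint_inner_left, h, TensorIP.inner_tmul]
  · rw [LinearMap.adjoint_apply_eq_inner_apply_one, ← inner_conj_symm,
      (starRingEnd ℂ).injective.eq_iff' (map_one _)]

namespace Copyable

theorem ne_zero (h : Copyable m u ψ) : ψ ≠ 0 := by
  rintro rfl
  simpa using h.2

theorem adjoint_mulLeft_apply (h : Copyable m u ψ) (a : H) :
    adjoint (mulLeft m a) ψ = conj ⟪ψ, a⟫_ℂ • ψ :=
  ext_inner_right ℂ fun y => by
    rw [adjoint_inner_left, mulLeft_apply, (copyable_iff.1 h).1, inner_smul_left,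
      Complex.conj_conj]

end Copyable

theorem exists_smul_copyable_of_adjoint_mulLeft_eq_smul (hunit : ∀ x, m (x ⊗ₜ[ℂ] u 1) = x)
    {v : H} (hv : v ≠ 0) (heig : ∀ a, ∃ c : ℂ, adjoint (mulLeft m a) v = c • v) :
    ∃ c : ℂ, Copyable m u (c • v) := by
  choose c hc using heig
  have hmul : ∀ x y, ⟪v, m (x ⊗ₜ[ℂ] y)⟫_ℂ = conj (c x) * ⟪v, y⟫_ℂ := fun x y => by
    rw [← mulLeft_apply, ← adjoint_inner_left, hc, inner_smul_left]
  set t := ⟪v, u 1⟫_ℂ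
  have hv_inner : ∀ x, ⟪v, x⟫_ℂ = conj (c x) * t := fun x => by rw [← hmul, hunit]
  have ht : t ≠ 0 := fun ht => hv (inner_self_eq_zero.mp (by rw [hv_inner, ht, mul_zero]))
  refine ⟨(conj t)⁻¹, copyable_iff.2 ⟨fun x y => ?_, ?_⟩⟩
  · simp only [inner_smul_left, map_inv₀, Complex.conj_conj, hmul, hv_inner x]
    field_simp
  · rw [inner_smul_left, map_inv₀, Complex.conj_conj]
    exact inv_mul_cancel₀ ht

namespace IsFrobenius

variable (hF : IsFrobenius m u)
include hF

theorem mul_comm (x y : H) : m (x ⊗ₜ[ℂ] y) = m (y ⊗ₜ[ℂ] x) := by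
  simpa using LinearMap.congr_fun hF.2.1 (y ⊗ₜ[ℂ] x)

theorem mul_assoc (x y z : H) :
    m (m (x ⊗ₜ[ℂ] y) ⊗ₜ[ℂ] z) = m (x ⊗ₜ[ℂ] m (y ⊗ₜ[ℂ] z)) := by
  simpa using LinearMap.congr_fun hF.1 ((x ⊗ₜ[ℂ] y) ⊗ₜ[ℂ] z)

theorem mul_unit (x : H) : m (x ⊗ₜ[ℂ] u 1) = x := hF.2.2.2.1 x

theorem commute_mulLeft (a b : H) : Commute (mulLeft m a) (mulLeft m b) :=
  LinearMap.ext fun x => by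
    simp only [Module.End.mul_apply, mulLeft_apply, ← hF.mul_assoc, hF.mul_comm a b]

theorem comm_adjoint_apply (x : H) :
    TensorProduct.comm ℂ H H (adjoint m x) = adjoint m x := by
  have h := congrArg adjoint hF.2.1
  rw [LinearMap.adjoint_comp, TensorIP.adjoint_comm] at h
  exact LinearMap.congr_fun h x

theorem adjoint_apply_eq_map (x : H) :
    adjoint m x = TensorProduct.map LinearMap.id (mulLeft m x) (adjoint m (u 1)) := by
  have hlaw := LinearMap.congr_fun hF.2.2.2.2 (x ⊗ₜ[ℂ] u 1)
  have hmap : TensorProduct.map m LinearMap.id ∘ₗ (TensorProduct.assoc ℂ H H H).symm.toLinearMap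
      ∘ₗ TensorProduct.mk ℂ H (H ⊗[ℂ] H) x = TensorProduct.map (mulLeft m x) LinearMap.id :=
    TensorProduct.ext' fun p q => by simp
  simp only [LinearMap.comp_apply, TensorProduct.map_tmul, LinearMap.id_apply, hF.mul_unit] at hlaw
  calc adjoint m x = TensorProduct.comm ℂ H H (adjoint m x) := (hF.comm_adjoint_apply x).symm
    _ = TensorProduct.comm ℂ H H
          (TensorProduct.map (mulLeft m x) LinearMap.id (adjoint m (u 1))) := by
      rw [← hlaw, ← LinearMap.congr_fun hmap]; rfl
    _ = _ := by rw [← TensorProduct.map_comm, hF.comm_adjoint_apply]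

theorem adjoint_mulLeft (a : H) :
    adjoint (mulLeft m a) = mulLeft m (adjoint (TensorProduct.mk ℂ H H a) (adjoint m (u 1))) := by
  ext x
  rw [mulLeft, LinearMap.adjoint_comp, LinearMap.comp_apply, hF.adjoint_apply_eq_map,
    TensorIP.adjoint_mk_map_id, mulLeft_apply, mulLeft_apply, hF.mul_comm]

theorem mul_copyable (hχ : Copyable m u χ) (a : H) : m (a ⊗ₜ[ℂ] χ) = ⟪χ, a⟫_ℂ • χ := by
  set b := adjoint (TensorProduct.mk ℂ H H a) (adjoint m (u 1))
  have hab : mulLeft m a = adjoint (mulLeft m b) := by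
    rw [← hF.adjoint_mulLeft, LinearMap.adjoint_adjoint]
  have heig : m (a ⊗ₜ[ℂ] χ) = conj ⟪χ, b⟫_ℂ • χ := by
    rw [← mulLeft_apply, hab, hχ.adjoint_mulLeft_apply]
  have hχχ : ⟪χ, χ⟫_ℂ ≠ 0 := inner_self_ne_zero.mpr hχ.ne_zero
  have hb : conj ⟪χ, b⟫_ℂ = ⟪χ, a⟫_ℂ := by
    refine mul_right_cancel₀ hχχ ?_
    rw [← inner_smul_right, ← heig, (copyable_iff.1 hχ).1]
  rw [heig, hb]

theorem inner_eq_zero_of_copyable (hψ : Copyable m u ψ) (hχ : Copyable m u χ) (hne : ψ ≠ χ) :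
    ⟪ψ, χ⟫_ℂ = 0 := by
  -- pair `m (a ⊗ χ)` with `ψ` in two ways, then take `a := ψ - χ`
  have h : ∀ a, ⟪ψ - χ, a⟫_ℂ * ⟪ψ, χ⟫_ℂ = 0 := fun a => by
    rw [inner_sub_left, sub_mul, ← (copyable_iff.1 hψ).1, hF.mul_copyable hχ, inner_smul_right,
      sub_self]
  exact (mul_eq_zero.1 (h (ψ - χ))).resolve_left (inner_self_ne_zero.2 (sub_ne_zero.2 hne))

theorem span_copyable : Submodule.span ℂ {ψ : H | Copyable m u ψ} = ⊤ := by
  set S := Submodule.span ℂ {ψ : H | Copyable m u ψ}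
  by_contra hS
  have hS_inv : ∀ a, S ∈ Module.End.invtSubmodule (adjoint (mulLeft m a)) := fun a =>
    Submodule.span_le.2 fun ψ hψ => by
      simpa [Copyable.adjoint_mulLeft_apply hψ a] using
        S.smul_mem (conj ⟪ψ, a⟫_ℂ) (Submodule.subset_span hψ)
  obtain ⟨v, hvS, hv0, hveig⟩ :=
    Module.End.exists_ne_zero_forall_apply_eq_smul_of_commute (mulLeft m) hF.commute_mulLeft
      (mt Submodule.orthogonal_eq_bot_iff.1 hS) fun a =>
        LinearMap.orthogonal_mem_invtSubmodule (hS_inv a)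
  obtain ⟨c, hc⟩ := exists_smul_copyable_of_adjoint_mulLeft_eq_smul hF.mul_unit hv0 fun a => by
    rw [hF.adjoint_mulLeft]
    exact hveig _
  have hmem : c • v ∈ S ⊓ Sᗮ := ⟨Submodule.subset_span hc, Sᗮ.smul_mem c hvS⟩
  rw [Submodule.inf_orthogonal_eq_bot, Submodule.mem_bot] at hmem
  exact hc.ne_zero hmem

theorem isOrthogonalBasis_copyable : IsOrthogonalBasis H {ψ : H | Copyable m u ψ} :=
  ⟨fun _ hψ _ hχ hne => hF.inner_eq_zero_of_copyable hψ hχ hne, fun h => h.ne_zero rfl,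
    hF.span_copyable⟩

end IsFrobenius

theorem eq_of_setOf_copyable_eq (hspan : Submodule.span ℂ {ψ : H | Copyable m u ψ} = ⊤)
    (h : {ψ : H | Copyable m u ψ} = {ψ : H | Copyable m' u' ψ}) : m = m' ∧ u = u' := by
  have h' : ∀ ψ, Copyable m u ψ → Copyable m' u' ψ := fun ψ hψ => h.subset hψ
  exact ⟨adjoint.injective (LinearMap.ext_on hspan fun ψ hψ => hψ.1.trans (h' ψ hψ).1.symm),
    adjoint.injective (LinearMap.ext_on hspan fun ψ hψ => hψ.2.trans (h' ψ hψ).2.symm)⟩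

theorem isFrobenius_of_copyable_basis {ι : Type*} (v : Module.Basis ι ℂ H)
    (horth : Pairwise fun i j => ⟪v i, v j⟫_ℂ = 0) (hv : ∀ i, Copyable m u (v i)) :
    IsFrobenius m u := by
  have hmul : ∀ i x y, ⟪v i, m (x ⊗ₜ[ℂ] y)⟫_ℂ = ⟪v i, x⟫_ℂ * ⟪v i, y⟫_ℂ :=
    fun i => (copyable_iff.1 (hv i)).1
  have hunit : ∀ i, ⟪v i, u 1⟫_ℂ = 1 := fun i => (copyable_iff.1 (hv i)).2
  have hmul_basis : ∀ x j, m (x ⊗ₜ[ℂ] v j) = ⟪v j, x⟫_ℂ • v j := fun x j =>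
    ext_inner_left_basis v fun i => by
      rw [hmul, inner_smul_right]
      rcases eq_or_ne i j with rfl | hij
      · ring
      · rw [horth hij, mul_zero, mul_zero]
  refine ⟨TensorProduct.ext_threefold fun x y z => ext_inner_left_basis v fun i => ?_,
    TensorProduct.ext' fun x y => ext_inner_left_basis v fun i => ?_,
    fun x => ext_inner_left_basis v fun i => ?_,
    fun x => ext_inner_left_basis v fun i => ?_,
    TensorProduct.ext (LinearMap.ext fun x => v.ext fun j => ?_)⟩
  · simp only [LinearMap.comp_apply, LinearEquiv.coe_coe, TensorProduct.map_tmul,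
      TensorProduct.assoc_tmul, LinearMap.id_apply, hmul]
    ring
  · simp [hmul, mul_comm]
  · simp [hmul, hunit]
  · simp [hmul, hunit]
  · simp [(hv j).1, hmul_basis, TensorProduct.smul_tmul']

theorem copyable_adjoint_copy_iff {ι : Type*} (v : Module.Basis ι ℂ H) {ψ : H} :
    Copyable (adjoint v.copy) (adjoint v.sumCoords) ψ ↔ ψ ∈ Set.range v := by
  simp only [Copyable, LinearMap.adjoint_adjoint]
  refine ⟨fun h => v.exists_eq_of_copy_apply_eq_tmul_self h.1 ?_, ?_⟩
  · rintro rfl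
    simpa using h.2
  · rintro ⟨i, rfl⟩
    exact ⟨v.copy_apply_self i, v.sumCoords_self_apply i⟩

theorem IsOrthogonalBasis.exists_isFrobenius {B : Set H} (hB : IsOrthogonalBasis H B) :
    ∃ p : (H ⊗[ℂ] H →ₗ[ℂ] H) × (ℂ →ₗ[ℂ] H),
      IsFrobenius p.1 p.2 ∧ {ψ : H | Copyable p.1 p.2 ψ} = B := by
  obtain ⟨horth, h0, hspan⟩ := hB
  have horth' : Pairwise fun ψ χ : B => ⟪(ψ : H), χ⟫_ℂ = 0 := fun ψ χ hne =>
    horth ψ ψ.2 χ χ.2 (Subtype.coe_injective.ne hne)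
  let v := Module.Basis.mk (linearIndependent_of_ne_zero_of_inner_eq_zero
    (fun ψ hψ => h0 (hψ ▸ ψ.2)) horth') (by simpa using hspan.ge)
  have hv : ⇑v = ((↑) : B → H) := Module.Basis.coe_mk _ _
  have hcop : ∀ ψ, Copyable (adjoint v.copy) (adjoint v.sumCoords) ψ ↔ ψ ∈ B := fun ψ => by
    simp [copyable_adjoint_copy_iff, hv]
  exact ⟨(adjoint v.copy, adjoint v.sumCoords),
    isFrobenius_of_copyable_basis v (hv ▸ horth') fun i => (hcop _).2 (hv ▸ i.2), Set.ext hcop⟩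

/-- Main theorem: taking copyable elements is a bijection between commutative
†-Frobenius monoid structures on `H` and orthogonal bases of `H`. -/
theorem frobenius_equiv_orthogonal_bases :
    Set.BijOn (fun p : (H ⊗[ℂ] H →ₗ[ℂ] H) × (ℂ →ₗ[ℂ] H) => {ψ : H | Copyable p.1 p.2 ψ})
      {p | IsFrobenius p.1 p.2} {B : Set H | IsOrthogonalBasis H B} :=
  ⟨fun _ hp => hp.isOrthogonalBasis_copyable,
    fun _ hp _ _ hpq => Prod.ext_iff.2 (eq_of_setOf_copyable_eq hp.span_copyable hpq),
    fun _ hB => hB.exists_isFrobenius⟩
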